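/- arXiv:1601.01259 — 4 statements merged into one kernel-verified Lean document; each statement's English description precedes it below -/
import Mathlib

section
/- Let D_n ⊆ M_n(ℂ) be the operator system of diagonal n×n complex matrices. For every k ≥ 2, D_n has no quantum k-anticlique; that is, there is no orthogonal projection P ∈ M_n(ℂ) of rank k ≥ 2 with P D_n P = ℂ·P. -/
open Matrix

/-- The compression map `A ↦ P * A * P`. -/
noncomputable def compress {m : Type*} [Fintype m] (P : Matrix m m ℂ) :
    Matrix m m ℂ →ₗ[ℂ] Matrix m m ℂ where
  toFun A := P * A * P
  map_add' A B := by simp [Matrix.mul_add, Matrix.add_mul]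
  map_smul' c A := by simp [Matrix.mul_smul, Matrix.smul_mul]

/-- An operator system: a subspace of matrices containing the identity and
closed under conjugate transpose. -/
def IsOperatorSystem {m : Type*} [Fintype m] [DecidableEq m]
    (V : Submodule ℂ (Matrix m m ℂ)) : Prop :=
  (1 : Matrix m m ℂ) ∈ V ∧ ∀ A ∈ V, Aᴴ ∈ V

/-- The operator system `D_n` of diagonal matrices. -/
noncomputable def diagMatrices (n : ℕ) : Submodule ℂ (Matrix (Fin n) (Fin n) ℂ) where
  carrier := {A | A.IsDiag}
  add_mem' := Matrix.IsDiag.add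
  zero_mem' := Matrix.isDiag_zero
  smul_mem' c _ h := h.smul c

/-! A nonzero idempotent `P` satisfies `P = ∑ᵢ P Eᵢᵢ P`, so some compression `P Eᵢᵢ P` of a
diagonal matrix unit is nonzero. If `P D_n P = ℂ P`, that compression equals `c • P` with
`c ≠ 0`, hence `P` factors through the rank-one matrix `Eᵢᵢ` and has rank at most one. -/

namespace Matrix

section MatrixUnits

variable {l m n R : Type*} [Fintype m] [DecidableEq m] [Semiring R]

theorem sum_mul_single_mul (A : Matrix l m R) (B : Matrix m n R) :
    ∑ i, A * (single i i 1 : Matrix m m R) * B = A * B := by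
  rw [← Matrix.sum_mul, ← Matrix.mul_sum, sum_single_one, Matrix.mul_one]

theorem exists_mul_single_mul_ne_zero {A : Matrix l m R} {B : Matrix m n R} (h : A * B ≠ 0) :
    ∃ i, A * (single i i 1 : Matrix m m R) * B ≠ 0 := by
  by_contra! hzero
  exact h (sum_mul_single_mul A B ▸ Finset.sum_eq_zero fun i _ => hzero i)

end MatrixUnits

section Rank

variable {m n K : Type*} [Fintype n] [Field K]

theorem rank_single_one_le [DecidableEq m] [DecidableEq n] (i : m) (j : n) :
    (single i j (1 : K)).rank ≤ 1 :=
  single_eq_single_vecMulVec_single (α := K) i j ▸ rank_vecMulVec_le _ _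

theorem rank_le_of_mul_mul_eq_smul [Fintype m] {P : Matrix m n K} {A : Matrix n m K} {c : K}
    (hc : c ≠ 0) (h : P * A * P = c • P) : P.rank ≤ A.rank := by
  have hP : P = (c⁻¹ • P) * A * P := by
    rw [Matrix.smul_mul, Matrix.smul_mul, h, smul_smul, inv_mul_cancel₀ hc, one_smul]
  calc P.rank = ((c⁻¹ • P) * A * P).rank := congrArg rank hP
    _ ≤ ((c⁻¹ • P) * A).rank := rank_mul_le_left _ _
    _ ≤ A.rank := rank_mul_le_right _ _

end Rank

end Matrix

theorem single_mem_diagMatrices {n : ℕ} (i : Fin n) (c : ℂ) :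
    single i i c ∈ diagMatrices n :=
  diagonal_single i c ▸ isDiag_diagonal _

theorem exists_smul_of_map_compress_eq_span {m : Type*} [Fintype m]
    {V : Submodule ℂ (Matrix m m ℂ)} {P A : Matrix m m ℂ}
    (h : V.map (compress P) = Submodule.span ℂ {P}) (hA : A ∈ V) :
    ∃ c : ℂ, P * A * P = c • P := by
  have hmem : compress P A ∈ Submodule.span ℂ {P} := h ▸ Submodule.mem_map_of_mem hA
  obtain ⟨c, hc⟩ := Submodule.mem_span_singleton.mp hmem
  exact ⟨c, hc.symm⟩

theorem diag_no_quantum_anticlique_general (n k : ℕ) (hk : 2 ≤ k)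
    (P : Matrix (Fin n) (Fin n) ℂ) (hP : P * P = P)
    (hrank : P.rank = k) :
    (diagMatrices n).map (compress P) ≠ Submodule.span ℂ {P} := by
  intro h
  have hP0 : P * P ≠ 0 := by
    rw [hP]
    rintro rfl
    rw [rank_zero] at hrank
    omega
  obtain ⟨i, hi⟩ := exists_mul_single_mul_ne_zero hP0
  obtain ⟨c, hc⟩ := exists_smul_of_map_compress_eq_span h (single_mem_diagMatrices i 1)
  have hc0 : c ≠ 0 := by
    rintro rfl
    exact hi (hc.trans (zero_smul ℂ P))
  have hrank_le : P.rank ≤ 1 :=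
    (rank_le_of_mul_mul_eq_smul hc0 hc).trans (rank_single_one_le i i)
  omega

/-- For `k ≥ 2`, the diagonal operator system `D_n` has no quantum
`k`-anticlique. -/
theorem diag_no_quantum_anticlique (n k : ℕ) (hk : 2 ≤ k)
    (P : Matrix (Fin n) (Fin n) ℂ) (hP : P * P = P) (hP' : Pᴴ = P)
    (hrank : P.rank = k) :
    (diagMatrices n).map (compress P) ≠ Submodule.span ℂ {P} :=
  diag_no_quantum_anticlique_general n k hk P hP hrank
end

section
/- If n ≥ k² + k − 1, then the diagonal operator system D_n ⊆ M_n(ℂ) has a quantum k-clique: there exists an orthogonal projection P ∈ M_n(ℂ) of rank k such that dim(P D_n P) = k², equivalently P D_n P = P M_n(ℂ) P. -/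
open Matrix

/-!
Let `V` be an `n × k` matrix whose rows `v_t` have rank-one products `v_tᴴ v_t` spanning
`M_k(ℂ)`. Then `V` has full column rank, so `P = V (VᴴV)⁻¹ Vᴴ` is the orthogonal projection onto
its column space, of rank `k`, and `P diag(d) P = V (VᴴV)⁻¹ (∑ₜ dₜ v_tᴴ v_t) (VᴴV)⁻¹ Vᴴ`.
As `d` varies the middle factor runs through all of `M_k(ℂ)`, and the outer factors act
injectively, so `P D_n P` has dimension `k²`. Such rows exist as soon as `k² ≤ n`: take
`e_a`, `e_a + e_b` and `e_a + i e_b`, since the span of their rank-one products contains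
`E_aa`, `E_ab + E_ba` and `i (E_ab - E_ba)`.
-/

open scoped ComplexOrder

namespace Matrix

variable {m p q ι : Type*}

def sandwich [Fintype m] (B : Matrix p m ℂ) (C : Matrix m q ℂ) :
    Matrix m m ℂ →ₗ[ℂ] Matrix p q ℂ where
  toFun A := B * A * C
  map_add' A A' := by rw [Matrix.mul_add, Matrix.add_mul]
  map_smul' c A := by rw [Matrix.mul_smul, Matrix.smul_mul, RingHom.id_apply]

theorem conjTranspose_mul_diagonal_mul [Fintype m] [DecidableEq m] (V : Matrix m ι ℂ)
    (d : m → ℂ) : Vᴴ * diagonal d * V = ∑ t, d t • vecMulVec (star (V t)) (V t) := by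
  ext i j
  simp [mul_apply, diagonal_apply, Matrix.sum_apply, vecMulVec, mul_comm, mul_left_comm]

section RangeProj

variable [Fintype m] [Fintype ι] [DecidableEq ι] {V : Matrix m ι ℂ}

/-- The orthogonal projection onto the column space of `V` when `Vᴴ * V` is invertible;
`0` otherwise, since then `(Vᴴ * V)⁻¹ = 0`. -/
noncomputable def rangeProj (V : Matrix m ι ℂ) : Matrix m m ℂ :=
  V * (Vᴴ * V)⁻¹ * Vᴴ

theorem conjTranspose_rangeProj (V : Matrix m ι ℂ) : (rangeProj V)ᴴ = rangeProj V := by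
  rw [rangeProj, conjTranspose_mul, conjTranspose_mul, conjTranspose_conjTranspose,
    conjTranspose_nonsing_inv, (isHermitian_conjTranspose_mul_self V).eq, Matrix.mul_assoc]

variable (hV : IsUnit (Vᴴ * V))
include hV

theorem rangeProj_mul_self : rangeProj V * rangeProj V = rangeProj V :=
  calc rangeProj V * rangeProj V = V * ((Vᴴ * V)⁻¹ * (Vᴴ * V)) * (Vᴴ * V)⁻¹ * Vᴴ := by
        simp only [rangeProj, Matrix.mul_assoc]
    _ = rangeProj V := by
        rw [nonsing_inv_mul _ ((isUnit_iff_isUnit_det _).1 hV), Matrix.mul_one, rangeProj]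

theorem rangeProj_mul : rangeProj V * V = V :=
  calc rangeProj V * V = V * ((Vᴴ * V)⁻¹ * (Vᴴ * V)) := by simp only [rangeProj, Matrix.mul_assoc]
    _ = V := by rw [nonsing_inv_mul _ ((isUnit_iff_isUnit_det _).1 hV), Matrix.mul_one]

theorem rank_rangeProj : (rangeProj V).rank = Fintype.card ι := by
  have hrank : V.rank = Fintype.card ι := by
    rw [← rank_conjTranspose_mul_self, rank_of_isUnit _ hV]
  refine le_antisymm ?_ ?_
  · calc (rangeProj V).rank ≤ (V * (Vᴴ * V)⁻¹).rank := rank_mul_le_left _ _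
      _ ≤ V.rank := rank_mul_le_left _ _
      _ = Fintype.card ι := hrank
  · calc Fintype.card ι = (rangeProj V * V).rank := by rw [rangeProj_mul hV, hrank]
      _ ≤ (rangeProj V).rank := rank_mul_le_left _ _

theorem finrank_map_compress_rangeProj (S : Submodule ℂ (Matrix m m ℂ)) :
    Module.finrank ℂ (S.map (compress (rangeProj V))) =
      Module.finrank ℂ (S.map (sandwich Vᴴ V)) := by
  set G := Vᴴ * V
  have hG : IsUnit G.det := (isUnit_iff_isUnit_det _).1 hV
  let Θ : Matrix ι ι ℂ →ₗ[ℂ] Matrix m m ℂ := sandwich (V * G⁻¹) (G⁻¹ * Vᴴ)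
  have hΘ : Function.LeftInverse (sandwich Vᴴ V) Θ := fun X =>
    calc Vᴴ * (V * G⁻¹ * X * (G⁻¹ * Vᴴ)) * V = (G * G⁻¹) * X * (G⁻¹ * G) := by
          simp only [G, Matrix.mul_assoc]
      _ = X := by rw [mul_nonsing_inv _ hG, nonsing_inv_mul _ hG, Matrix.one_mul, Matrix.mul_one]
  have hcomp : compress (rangeProj V) = Θ ∘ₗ sandwich Vᴴ V := by
    ext1 A
    change rangeProj V * A * rangeProj V = V * G⁻¹ * (Vᴴ * A * V) * (G⁻¹ * Vᴴ)
    simp only [rangeProj, G, Matrix.mul_assoc]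
  rw [hcomp, Submodule.map_comp]
  exact (Submodule.equivMapOfInjective Θ hΘ.injective _).finrank_eq.symm

end RangeProj

def rowOuterProducts (V : Matrix m ι ℂ) : Set (Matrix ι ι ℂ) :=
  Set.range fun t => vecMulVec (star (V t)) (V t)

theorem mulVec_injective_of_span_rowOuterProducts [Fintype ι] [DecidableEq ι] {V : Matrix m ι ℂ}
    (hV : Submodule.span ℂ (rowOuterProducts V) = ⊤) : Function.Injective V.mulVec := by
  rw [← coe_mulVecLin, ← LinearMap.ker_eq_bot, LinearMap.ker_eq_bot']
  intro x hx
  suffices ∀ A ∈ Submodule.span ℂ (rowOuterProducts V), A *ᵥ x = 0 by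
    simpa using this 1 (hV ▸ Submodule.mem_top)
  intro A hA
  induction hA using Submodule.span_induction with
  | mem _ h =>
    obtain ⟨t, rfl⟩ := h
    have hrow : V t ⬝ᵥ x = 0 := congrFun hx t
    rw [vecMulVec_mulVec, hrow, MulOpposite.op_zero, zero_smul]
  | zero => exact zero_mulVec x
  | add A B _ _ hA hB => rw [add_mulVec, hA, hB, add_zero]
  | smul c A _ hA => rw [smul_mulVec, hA, smul_zero]

theorem isUnit_conjTranspose_mul_self_of_span_rowOuterProducts [Fintype m] [Fintype ι]
    [DecidableEq ι] {V : Matrix m ι ℂ} (hV : Submodule.span ℂ (rowOuterProducts V) = ⊤) :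
    IsUnit (Vᴴ * V) := by
  rw [← mulVec_injective_iff_isUnit, ← coe_mulVecLin, ← LinearMap.ker_eq_bot,
    ker_mulVecLin_conjTranspose_mul_self, LinearMap.ker_eq_bot, coe_mulVecLin]
  exact mulVec_injective_of_span_rowOuterProducts hV

theorem map_sandwich_eq_top_of_span_rowOuterProducts [Fintype m] [DecidableEq m]
    {V : Matrix m ι ℂ} (hV : Submodule.span ℂ (rowOuterProducts V) = ⊤)
    {S : Submodule ℂ (Matrix m m ℂ)} (hS : ∀ d, diagonal d ∈ S) :
    S.map (sandwich Vᴴ V) = ⊤ := by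
  rw [eq_top_iff, ← hV, Submodule.span_le]
  rintro _ ⟨t, rfl⟩
  refine ⟨diagonal (Pi.single t 1), hS _, ?_⟩
  simp [sandwich, conjTranspose_mul_diagonal_mul, Pi.single_apply]

theorem finrank_map_compress_rangeProj_of_span_rowOuterProducts [Fintype m] [DecidableEq m]
    [Fintype ι] [DecidableEq ι] {V : Matrix m ι ℂ}
    (hV : Submodule.span ℂ (rowOuterProducts V) = ⊤) {S : Submodule ℂ (Matrix m m ℂ)}
    (hS : ∀ d, diagonal d ∈ S) :
    Module.finrank ℂ (S.map (compress (rangeProj V))) = Fintype.card ι ^ 2 := by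
  rw [finrank_map_compress_rangeProj (isUnit_conjTranspose_mul_self_of_span_rowOuterProducts hV),
    map_sandwich_eq_top_of_span_rowOuterProducts hV hS, finrank_top, Module.finrank_matrix,
    Module.finrank_self, mul_one, sq]

section CliqueRows

variable [DecidableEq ι]

theorem vecMulVec_star_single_add_smul_single (a b : ι) (c : ℂ) :
    vecMulVec (star (Pi.single a 1 + c • Pi.single b 1)) (Pi.single a 1 + c • Pi.single b 1) =
      single a a 1 + c • single a b 1 + star c • single b a 1 + (star c * c) • single b b 1 := by
  simp only [star_add, star_smul, Pi.star_single, star_one, add_vecMulVec, vecMulVec_add,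
    smul_vecMulVec, vecMulVec_smul, ← single_eq_single_vecMulVec_single]
  module

variable [LinearOrder ι]

noncomputable def cliqueRows : Matrix (ι × ι) ι ℂ := fun p =>
  Pi.single p.1 1 + (if p.1 < p.2 then 1 else if p.2 < p.1 then Complex.I else 0) • Pi.single p.2 1

theorem span_rowOuterProducts_cliqueRows [Fintype ι] :
    Submodule.span ℂ (rowOuterProducts (cliqueRows : Matrix (ι × ι) ι ℂ)) = ⊤ := by
  set W := Submodule.span ℂ (rowOuterProducts (cliqueRows : Matrix (ι × ι) ι ℂ))
  have hmem (p : ι × ι) : vecMulVec (star (cliqueRows p)) (cliqueRows p) ∈ W :=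
    Submodule.subset_span ⟨p, rfl⟩
  have hdiag (a : ι) : single a a (1 : ℂ) ∈ W := by
    have h := hmem (a, a)
    simp only [cliqueRows, lt_irrefl, if_false, vecMulVec_star_single_add_smul_single] at h
    simpa using h
  have hoff (a b : ι) (hab : a < b) : single a b (1 : ℂ) ∈ W ∧ single b a (1 : ℂ) ∈ W := by
    have hD := W.add_mem (hdiag a) (hdiag b)
    have hX := hmem (a, b)
    have hY := hmem (b, a)
    simp only [cliqueRows, if_pos hab, if_neg hab.not_gt, vecMulVec_star_single_add_smul_single]
      at hX hY
    have hsum : single a b (1 : ℂ) + single b a 1 ∈ W := by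
      convert W.sub_mem hX hD using 1
      simp only [star_one, one_smul, mul_one]
      abel
    have hdiff : single a b (1 : ℂ) - single b a 1 ∈ W := by
      convert W.smul_mem Complex.I (W.sub_mem hY hD) using 1
      simp only [Complex.star_def, Complex.conj_I, neg_mul, Complex.I_mul_I, neg_neg]
      match_scalars <;> ring_nf <;> simp [Complex.I_sq]
    constructor
    · convert W.smul_mem (1 / 2 : ℂ) (W.add_mem hsum hdiff) using 1
      module
    · convert W.smul_mem (1 / 2 : ℂ) (W.sub_mem hsum hdiff) using 1
      module
  rw [eq_top_iff, ← (stdBasis ℂ ι ι).span_eq, Submodule.span_le]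
  rintro _ ⟨⟨i, j⟩, rfl⟩
  rw [stdBasis_eq_single]
  rcases lt_trichotomy i j with h | rfl | h
  · exact (hoff i j h).1
  · exact hdiag i
  · exact (hoff j i h).2

end CliqueRows

end Matrix

/-- If `n ≥ k² + k - 1` then `D_n` has a quantum `k`-clique. -/
theorem diag_quantum_clique (n k : ℕ) (hn : k ^ 2 + k - 1 ≤ n) :
    ∃ P : Matrix (Fin n) (Fin n) ℂ, P * P = P ∧ Pᴴ = P ∧ P.rank = k ∧
      Module.finrank ℂ ((diagMatrices n).map (compress P)) = k ^ 2 := by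
  have hkn : k * k ≤ n := by
    rcases Nat.eq_zero_or_pos k with rfl | hk
    · exact Nat.zero_le n
    · rw [← sq]; omega
  let row : Fin k × Fin k ↪ Fin n := finProdFinEquiv.toEmbedding.trans (Fin.castLEEmb hkn)
  let V : Matrix (Fin n) (Fin k) ℂ := Function.extend row (fun p => cliqueRows p) 0
  have hVrow (p : Fin k × Fin k) : V (row p) = cliqueRows p := row.injective.extend_apply _ _ p
  have hV : Submodule.span ℂ (rowOuterProducts V) = ⊤ := by
    refine eq_top_iff.2 (span_rowOuterProducts_cliqueRows.ge.trans (Submodule.span_mono ?_))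
    rintro _ ⟨p, rfl⟩
    exact ⟨row p, by simp only [hVrow]⟩
  have hG := isUnit_conjTranspose_mul_self_of_span_rowOuterProducts hV
  refine ⟨rangeProj V, rangeProj_mul_self hG, conjTranspose_rangeProj V, ?_, ?_⟩
  · rw [rank_rangeProj hG, Fintype.card_fin]
  · rw [finrank_map_compress_rangeProj_of_span_rowOuterProducts hV isDiag_diagonal,
      Fintype.card_fin]
end

section
/- Let 𝒱_n = span{I_n, E_{11}, E_{12}, …, E_{1n}, E_{21}, …, E_{n1}} ⊆ M_n(ℂ), where E_{ij} is the matrix unit with 1 in entry (i,j) and 0 elsewhere. Then 𝒱_n has no quantum k-clique for any k ≥ 3: for every orthogonal projection P of rank k ≥ 3, dim(P𝒱_nP) < k². -/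
open Matrix

/-!
Each compressed matrix unit is a rank-one matrix, `P E_{ij} P = (P e_i)(e_jᵀ P)`. Compressing the
first row `E_{0j}` therefore only produces matrices `(P e_0) wᵀ` with `w` in the row space of `P`,
and compressing the first column only produces `v (e_0ᵀ P)` with `v` in the column space of `P`.
Together with `P I P` this gives `dim (P 𝒱 P) ≤ 1 + 2k`, which is less than `k²` once `k ≥ 3`.
-/

open Module Submodule

section

variable {K l m n : Type*}

theorem mul_single_one_mul [Semiring K] [Fintype m] [DecidableEq m] [Fintype n] [DecidableEq n]
    (P : Matrix l m K) (Q : Matrix n l K) (i : m) (j : n) :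
    P * single i j (1 : K) * Q = vecMulVec (P.col i) (Q.row j) := by
  rw [single_eq_single_vecMulVec_single, mul_vecMulVec, vecMulVec_mul, mulVec_single_one,
    single_one_vecMul]

variable [Field K]

theorem finrank_span_range_vecMulVec_row_le [Finite m] [Fintype l] (v : n → K)
    (Q : Matrix m l K) :
    finrank K (span K (Set.range fun j => vecMulVec v (Q.row j))) ≤ Q.rank := by
  have hrange : (Set.range fun j => vecMulVec v (Q.row j)) =
      vecMulVecBilin K K v '' Set.range Q.row :=
    Set.range_comp' _ _
  rw [rank_eq_finrank_span_row, hrange, span_image]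
  exact finrank_map_le _ _

theorem finrank_span_range_vecMulVec_col_le [Finite m] [Fintype l] (w : n → K)
    (Q : Matrix m l K) :
    finrank K (span K (Set.range fun i => vecMulVec (Q.col i) w)) ≤ Q.rank := by
  have hrange : (Set.range fun i => vecMulVec (Q.col i) w) =
      (vecMulVecBilin K K).flip w '' Set.range Q.col :=
    Set.range_comp' ((vecMulVecBilin K K).flip w) Q.col
  rw [rank_eq_finrank_span_cols, hrange, span_image]
  exact finrank_map_le _ _

end

section

variable {m : Type*} [Fintype m] [DecidableEq m]

/-- The paper's `𝒱_n` is `rowColumnSpan ℂ 0`. -/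
def rowColumnSpan (K : Type*) [Semiring K] (i₀ : m) : Submodule K (Matrix m m K) :=
  span K ({1} ∪ Set.range (fun j => single i₀ j (1 : K)) ∪ Set.range (fun i => single i i₀ 1))

theorem compress_single_one (P : Matrix m m ℂ) (i j : m) :
    compress P (single i j 1) = vecMulVec (P.col i) (P.row j) :=
  mul_single_one_mul P P i j

theorem map_compress_rowColumnSpan (P : Matrix m m ℂ) (i₀ : m) :
    (rowColumnSpan ℂ i₀).map (compress P) =
      (ℂ ∙ compress P 1) ⊔ span ℂ (Set.range fun j => vecMulVec (P.col i₀) (P.row j))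
        ⊔ span ℂ (Set.range fun i => vecMulVec (P.col i) (P.row i₀)) := by
  rw [rowColumnSpan, map_span, Set.image_union, Set.image_union, Set.image_singleton,
    ← Set.range_comp', ← Set.range_comp', span_union, span_union]
  simp only [compress_single_one]

theorem finrank_map_compress_rowColumnSpan_le (P : Matrix m m ℂ) (i₀ : m) :
    finrank ℂ ((rowColumnSpan ℂ i₀).map (compress P)) ≤ 1 + P.rank + P.rank := by
  rw [map_compress_rowColumnSpan]
  grw [finrank_add_le_finrank_add_finrank, finrank_add_le_finrank_add_finrank,
    finrank_span_range_vecMulVec_row_le, finrank_span_range_vecMulVec_col_le,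
    finrank_span_le_card]
  simp

end

theorem row_column_no_quantum_clique_general (n : ℕ) (hn : 0 < n) (k : ℕ) (hk : 3 ≤ k)
    (P : Matrix (Fin n) (Fin n) ℂ)
    (hrank : P.rank = k) :
    Module.finrank ℂ ((Submodule.span ℂ
      ({(1 : Matrix (Fin n) (Fin n) ℂ)}
        ∪ Set.range (fun j : Fin n => Matrix.single (⟨0, hn⟩ : Fin n) j (1 : ℂ))
        ∪ Set.range (fun i : Fin n => Matrix.single i (⟨0, hn⟩ : Fin n) (1 : ℂ)))).map
      (compress P)) < k ^ 2 := by
  calc _ ≤ 1 + P.rank + P.rank := finrank_map_compress_rowColumnSpan_le P ⟨0, hn⟩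
    _ < k ^ 2 := by rw [hrank]; nlinarith

/-- The operator system spanned by the identity together with the first row
and first column of matrix units has no quantum `k`-clique for `k ≥ 3`. -/
theorem row_column_no_quantum_clique (n : ℕ) (hn : 0 < n) (k : ℕ) (hk : 3 ≤ k)
    (P : Matrix (Fin n) (Fin n) ℂ) (hP : P * P = P) (hP' : Pᴴ = P)
    (hrank : P.rank = k) :
    Module.finrank ℂ ((Submodule.span ℂ
      ({(1 : Matrix (Fin n) (Fin n) ℂ)}
        ∪ Set.range (fun j : Fin n => Matrix.single (⟨0, hn⟩ : Fin n) j (1 : ℂ))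
        ∪ Set.range (fun i : Fin n => Matrix.single i (⟨0, hn⟩ : Fin n) (1 : ℂ)))).map
      (compress P)) < k ^ 2 :=
  row_column_no_quantum_clique_general n hn k hk P hrank
end

section
/- Let v_1, …, v_r be vectors in ℂ^s. Then there exist vectors w_1, …, w_r ∈ ℂ^{r−1} such that the vectors v_i ⊕ w_i ∈ ℂ^{s+r−1} are pairwise orthogonal and all have the same norm. -/
/-!
Let `G` be the Gram matrix of `v₁, …, vᵣ` and `c` its largest eigenvalue. Then `c • 1 - G` is
positive semidefinite and singular, hence the Gram matrix of `r` vectors `w₁, …, wᵣ` in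
`ℂ^{r-1}`: in an eigenbasis it is `diag (c - μₜ)`, whose entry at the top eigenvalue vanishes.
The Gram matrix of the concatenations `vᵢ ⊕ wᵢ` is then `G + (c • 1 - G) = c • 1`.
-/

open Matrix
open scoped InnerProductSpace ComplexConjugate

variable {𝕜 : Type*} [RCLike 𝕜]

namespace EuclideanSpace

lemma inner_toLp_append {m n : ℕ} (x x' : EuclideanSpace 𝕜 (Fin m))
    (y y' : EuclideanSpace 𝕜 (Fin n)) :
    ⟪WithLp.toLp 2 (Fin.append x.ofLp y.ofLp), WithLp.toLp 2 (Fin.append x'.ofLp y'.ofLp)⟫_𝕜 =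
      ⟪x, x'⟫_𝕜 + ⟪y, y'⟫_𝕜 := by
  simp only [PiLp.inner_apply, Fin.sum_univ_add, Fin.append_left, Fin.append_right]

lemma inner_toLp_comp_succAbove {n : ℕ} {p : Fin (n + 1)} {x : EuclideanSpace 𝕜 (Fin (n + 1))}
    (hx : x p = 0) (y : EuclideanSpace 𝕜 (Fin (n + 1))) :
    ⟪WithLp.toLp 2 (x.ofLp ∘ p.succAbove), WithLp.toLp 2 (y.ofLp ∘ p.succAbove)⟫_𝕜 =
      ⟪x, y⟫_𝕜 := by
  rw [PiLp.inner_apply, PiLp.inner_apply, Fin.sum_univ_succAbove _ p, hx, inner_zero_left,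
    zero_add]
  rfl

end EuclideanSpace

namespace Matrix

lemma gram_toLp_col {m n : Type*} [Fintype m] (M : Matrix m n 𝕜) :
    gram 𝕜 (fun j ↦ WithLp.toLp 2 (fun i ↦ M i j)) = Mᴴ * M := by
  ext i j
  simp [mul_apply, PiLp.inner_apply, mul_comm]

namespace IsHermitian

variable {n : Type*} [Fintype n] [DecidableEq n] {A : Matrix n n 𝕜}

/-- `N = diag (√(c - μₜ)) * Uᴴ` for the eigenvector matrix `U`; its rows vanish at the
eigenvalues equal to `c`. -/
lemma exists_conjTranspose_mul_self_eq_smul_one_sub (hA : A.IsHermitian) {c : ℝ}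
    (hc : ∀ t, hA.eigenvalues t ≤ c) :
    ∃ N : Matrix n n 𝕜, Nᴴ * N = (c : 𝕜) • 1 - A ∧
      ∀ t j, hA.eigenvalues t = c → N t j = 0 := by
  set U : Matrix n n 𝕜 := (hA.eigenvectorUnitary : Matrix n n 𝕜)
  have hU : U * star U = 1 := Unitary.mul_star_self_of_mem hA.eigenvectorUnitary.2
  have hsq (t : n) : conj (√(c - hA.eigenvalues t) : 𝕜) * √(c - hA.eigenvalues t) =
      c - hA.eigenvalues t := by
    rw [RCLike.conj_ofReal, ← RCLike.ofReal_mul, Real.mul_self_sqrt (sub_nonneg.2 (hc t)),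
      RCLike.ofReal_sub]
  refine ⟨diagonal (fun t ↦ (√(c - hA.eigenvalues t) : 𝕜)) * star U, ?_, fun t j ht ↦ ?_⟩
  · calc _ = U * diagonal (fun t ↦ (c : 𝕜) - hA.eigenvalues t) * star U := by
          rw [← star_eq_conjTranspose, star_mul, star_star, ← Matrix.mul_assoc,
            Matrix.mul_assoc U, star_eq_conjTranspose, diagonal_conjTranspose,
            diagonal_mul_diagonal]
          simp only [Pi.star_apply, RCLike.star_def, hsq]
      _ = (c : 𝕜) • 1 - A := by
          have hdiag : diagonal (fun t ↦ (c : 𝕜) - hA.eigenvalues t) =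
              (c : 𝕜) • 1 - diagonal (RCLike.ofReal ∘ hA.eigenvalues) := by
            rw [← diagonal_one, ← diagonal_smul, diagonal_sub]
            simp
          conv_rhs => rw [hA.spectral_theorem, Unitary.conjStarAlgAut_apply]
          rw [hdiag, Matrix.mul_sub, Matrix.sub_mul, Matrix.mul_smul,
            Matrix.smul_mul, Matrix.mul_one, hU]
  · simp [diagonal_mul, ht]

end IsHermitian

lemma IsHermitian.exists_gram_eq_smul_one_sub {n : ℕ} {A : Matrix (Fin (n + 1)) (Fin (n + 1)) 𝕜}
    (hA : A.IsHermitian) :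
    ∃ c : ℝ, ∃ w : Fin (n + 1) → EuclideanSpace 𝕜 (Fin n), gram 𝕜 w = (c : 𝕜) • 1 - A := by
  obtain ⟨p, -, hp⟩ := Finset.exists_max_image Finset.univ hA.eigenvalues Finset.univ_nonempty
  obtain ⟨N, hN, hNp⟩ :=
    hA.exists_conjTranspose_mul_self_eq_smul_one_sub fun t ↦ hp t (Finset.mem_univ t)
  refine ⟨hA.eigenvalues p, fun j ↦ WithLp.toLp 2 ((fun t ↦ N t j) ∘ p.succAbove), ?_⟩
  rw [← hN, ← gram_toLp_col]
  ext i j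
  exact EuclideanSpace.inner_toLp_comp_succAbove (x := WithLp.toLp 2 fun t ↦ N t i) (hNp p i rfl)
    (WithLp.toLp 2 fun t ↦ N t j)

end Matrix

/-- Given vectors `v₁, …, vᵣ` in `ℂˢ`, there are vectors `w₁, …, wᵣ` in
`ℂ^{r-1}` such that the concatenations `vᵢ ⊕ wᵢ ∈ ℂ^{s+r-1}` are pairwise
orthogonal and all have the same norm. -/
theorem pad_to_orthogonal_equal_norm (s r : ℕ)
    (v : Fin r → EuclideanSpace ℂ (Fin s)) :
    ∃ w : Fin r → EuclideanSpace ℂ (Fin (r - 1)),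
      (∀ i j : Fin r, i ≠ j →
        inner (𝕜 := ℂ)
          ((WithLp.equiv 2 (Fin (s + (r - 1)) → ℂ)).symm (Fin.append (v i) (w i)))
          ((WithLp.equiv 2 (Fin (s + (r - 1)) → ℂ)).symm (Fin.append (v j) (w j))) = 0) ∧
      (∀ i j : Fin r,
        ‖(WithLp.equiv 2 (Fin (s + (r - 1)) → ℂ)).symm (Fin.append (v i) (w i))‖ =
        ‖(WithLp.equiv 2 (Fin (s + (r - 1)) → ℂ)).symm (Fin.append (v j) (w j))‖) := by
  obtain _ | n := r
  · exact ⟨0, fun i ↦ i.elim0, fun i ↦ i.elim0⟩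
  obtain ⟨c, w, hw⟩ := (isHermitian_gram ℂ v).exists_gram_eq_smul_one_sub
  have hinner (i j : Fin (n + 1)) :
      ⟪WithLp.toLp 2 (Fin.append (v i).ofLp (w i).ofLp),
        WithLp.toLp 2 (Fin.append (v j).ofLp (w j).ofLp)⟫_ℂ = if i = j then (c : ℂ) else 0 := by
    rw [EuclideanSpace.inner_toLp_append, ← gram_apply (𝕜 := ℂ) v, ← gram_apply (𝕜 := ℂ) w, hw]
    simp [one_apply]
  refine ⟨w, fun i j hij ↦ ?_, fun i j ↦ ?_⟩
  · simpa [hij] using hinner i j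
  · simp only [WithLp.equiv_symm_apply, @norm_eq_sqrt_re_inner ℂ, hinner, if_pos]
end
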